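/- Let E(t,r) denote the group of invertible elements of the monoid G(t,r) and let φ : E(t,r) → (ℤ/2^{t+1})ˣ × (ℤ/2^{r+1})ˣ be the group homomorphism φ(x,y,z) = (x, π(x) + μ(z)). The subset H = {(x,0,z) : x ∈ (ℤ/2^{t+1})ˣ, z ∈ ℤ/2^r} is a subgroup of E(t,r), and φ restricted to H is a group isomorphism H ≅ (ℤ/2^{t+1})ˣ × (ℤ/2^{r+1})ˣ. In particular, the short exact sequence ℤ/2^{r+1} ↪ E(t,r) ↠ (ℤ/2^{t+1})ˣ × (ℤ/2^{r+1})ˣ given by φ and its kernel splits. -/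

import Mathlib

/-- The composition law of `[C,C]` for the elementary Chang complex `C = C^{n+2,t}_r`
with `t ≥ r`, in coordinates `ℤ/2^{t+1} × ℤ/2^{r+1} × ℤ/2^r`. -/
def changOp (t r : ℕ) (htr : r ≤ t)
    (a b : ZMod (2 ^ (t + 1)) × ZMod (2 ^ (r + 1)) × ZMod (2 ^ r)) :
    ZMod (2 ^ (t + 1)) × ZMod (2 ^ (r + 1)) × ZMod (2 ^ r) :=
  (a.1 * b.1,
   ZMod.castHom (pow_dvd_pow 2 (by omega : r + 1 ≤ t + 1)) (ZMod (2 ^ (r + 1))) a.1 * b.2.1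
     + ZMod.castHom (pow_dvd_pow 2 (by omega : r + 1 ≤ t + 1)) (ZMod (2 ^ (r + 1))) b.1 * a.2.1
     + a.2.1 * (2 * (ZMod.cast b.2.2 : ZMod (2 ^ (r + 1)))),
   ZMod.castHom (pow_dvd_pow 2 (by omega : r ≤ t + 1)) (ZMod (2 ^ r)) a.1 * b.2.2
     + ZMod.castHom (pow_dvd_pow 2 (by omega : r ≤ t + 1)) (ZMod (2 ^ r)) b.1 * a.2.2
     + 2 * a.2.2 * b.2.2)

/-- The set `E(t,r)` of invertible elements of the monoid `G(t,r)`. -/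
def changE (t r : ℕ) (htr : r ≤ t) :
    Set (ZMod (2 ^ (t + 1)) × ZMod (2 ^ (r + 1)) × ZMod (2 ^ r)) :=
  {a | ∃ b, changOp t r htr a b = (1, 0, 0) ∧ changOp t r htr b a = (1, 0, 0)}

/-- The map `φ(x,y,z) = (x, π(x) + μ(z))`. -/
def changPhi (t r : ℕ) (htr : r ≤ t)
    (a : ZMod (2 ^ (t + 1)) × ZMod (2 ^ (r + 1)) × ZMod (2 ^ r)) :
    ZMod (2 ^ (t + 1)) × ZMod (2 ^ (r + 1)) :=
  (a.1,
   ZMod.castHom (pow_dvd_pow 2 (by omega : r + 1 ≤ t + 1)) (ZMod (2 ^ (r + 1))) a.1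
     + 2 * (ZMod.cast a.2.2 : ZMod (2 ^ (r + 1))))

/-- The subset `H = {(x,0,z) : x a unit}`. -/
def changH (t r : ℕ) :
    Set (ZMod (2 ^ (t + 1)) × ZMod (2 ^ (r + 1)) × ZMod (2 ^ r)) :=
  {a | IsUnit a.1 ∧ a.2.1 = 0}

/-!
Everything is transported along `φ`. The doubling map `μ` is injective and `μ ∘ π = 2·`; this
makes `φ` multiplicative on all of `G(t,r)` and injective on `H`, while `φ(H)` is all pairs of
units because two odd residues differ by an element of `2ℤ/2^{r+1} = im μ`. Hence `a ∘ b ∈ H` is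
the identity as soon as `φ(a ∘ b) = 1`, which gives inverses in `H`, and the inverse of `φ` on
`H` is a multiplicative section.
-/

namespace ZMod

lemma castHom_castHom {n m d : ℕ} (hm : n ∣ m) (hd : m ∣ d) (x : ZMod d) :
    castHom hm (ZMod n) (castHom hd (ZMod m) x) = castHom (hm.trans hd) (ZMod n) x :=
  RingHom.congr_fun (castHom_comp hm hd) x

lemma castHom_cast {m n : ℕ} [NeZero m] (h : m ∣ n) (a : ZMod m) :
    castHom h (ZMod m) (cast a : ZMod n) = a := by
  rw [← natCast_val, map_natCast, natCast_zmod_val]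

lemma natCast_mul_eq_natCast_mul_iff {p k : ℕ} [NeZero p] (c c' : ZMod (p ^ (k + 1))) :
    (p : ZMod (p ^ (k + 1))) * c = p * c' ↔
      castHom (pow_dvd_pow p k.le_succ) (ZMod (p ^ k)) c =
        castHom (pow_dvd_pow p k.le_succ) (ZMod (p ^ k)) c' := by
  have key := Nat.ModEq.mul_left_cancel_iff' (NeZero.ne p) (m := p ^ k) (a := c.val) (b := c'.val)
  rw [← pow_succ'] at key
  rw [← natCast_zmod_val c, ← natCast_zmod_val c', map_natCast, map_natCast, ← Nat.cast_mul,
    ← Nat.cast_mul, natCast_eq_natCast_iff, natCast_eq_natCast_iff, key]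

lemma exists_eq_natCast_mul_of_castHom_eq_zero {d n : ℕ} [NeZero n] (h : d ∣ n) {w : ZMod n}
    (hw : castHom h (ZMod d) w = 0) : ∃ c : ZMod n, w = d * c := by
  rw [← natCast_zmod_val w, map_natCast, natCast_eq_zero_iff] at hw
  obtain ⟨m, hm⟩ := hw
  exact ⟨m, by rw [← natCast_zmod_val w, hm, Nat.cast_mul]⟩

lemma castHom_two_eq_one_of_isUnit {n : ℕ} (h : 2 ∣ n) {u : ZMod n} (hu : IsUnit u) :
    castHom h (ZMod 2) u = 1 := by
  obtain ⟨v, hv⟩ := hu.map (castHom h (ZMod 2))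
  rw [← hv, Subsingleton.elim v 1, Units.val_one]

lemma isNilpotent_natCast_zmod_pow (p k : ℕ) : IsNilpotent (p : ZMod (p ^ k)) :=
  ⟨k, by rw [← Nat.cast_pow, natCast_self]⟩

end ZMod

section Chang

open ZMod

lemma two_mul_cast_eq_two_mul_iff {k : ℕ} (z : ZMod (2 ^ k)) (c : ZMod (2 ^ (k + 1))) :
    (2 : ZMod (2 ^ (k + 1))) * ZMod.cast z = 2 * c ↔
      z = castHom (pow_dvd_pow 2 k.le_succ) (ZMod (2 ^ k)) c := by
  have h := natCast_mul_eq_natCast_mul_iff (p := 2) (ZMod.cast z) c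
  rwa [Nat.cast_ofNat, castHom_cast] at h

variable {t r : ℕ} (htr : r ≤ t)

lemma one_mem_changH : (1, 0, 0) ∈ changH t r := ⟨isUnit_one, rfl⟩

lemma changOp_mem_changH {a b} (ha : a ∈ changH t r) (hb : b ∈ changH t r) :
    changOp t r htr a b ∈ changH t r := by
  obtain ⟨x, y, z⟩ := a
  obtain ⟨x', y', z'⟩ := b
  obtain ⟨hx, rfl : y = 0⟩ := ha
  obtain ⟨hx', rfl : y' = 0⟩ := hb
  exact ⟨hx.mul hx', by simp [changOp]⟩

lemma changPhi_one : changPhi t r htr (1, 0, 0) = 1 := by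
  simp only [changPhi, map_one, ZMod.cast_zero, mul_zero, add_zero]
  rfl

lemma changPhi_changOp (a b) :
    changPhi t r htr (changOp t r htr a b) = changPhi t r htr a * changPhi t r htr b := by
  obtain ⟨x, y, z⟩ := a
  obtain ⟨x', y', z'⟩ := b
  refine Prod.ext rfl ?_
  simp only [changPhi, changOp, Prod.snd_mul, map_mul]
  have hμ : (2 : ZMod (2 ^ (r + 1))) *
      ZMod.cast (castHom (pow_dvd_pow 2 (by omega : r ≤ t + 1)) (ZMod (2 ^ r)) x * z'
        + castHom (pow_dvd_pow 2 (by omega : r ≤ t + 1)) (ZMod (2 ^ r)) x' * z + 2 * z * z') =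
      2 * (castHom (pow_dvd_pow 2 (by omega : r + 1 ≤ t + 1)) (ZMod (2 ^ (r + 1))) x * ZMod.cast z'
        + castHom (pow_dvd_pow 2 (by omega : r + 1 ≤ t + 1)) (ZMod (2 ^ (r + 1))) x' * ZMod.cast z
        + 2 * ZMod.cast z * ZMod.cast z') := by
    refine (two_mul_cast_eq_two_mul_iff _ _).mpr ?_
    simp only [map_add, map_mul, castHom_castHom, castHom_cast, map_ofNat]
  linear_combination hμ

lemma isUnit_changPhi {a} (ha : a ∈ changH t r) : IsUnit (changPhi t r htr a) := by
  refine Prod.isUnit_iff.mpr ⟨ha.1, ?_⟩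
  have h2 : IsNilpotent (2 * ZMod.cast a.2.2 : ZMod (2 ^ (r + 1))) := by
    have h := isNilpotent_natCast_zmod_pow 2 (r + 1)
    rw [Nat.cast_ofNat] at h
    exact (Commute.all _ _).isNilpotent_mul_right h
  exact h2.isUnit_add_left_of_commute (ha.1.map _) (Commute.all _ _)

lemma changPhi_injOn : Set.InjOn (changPhi t r htr) (changH t r) := by
  rintro ⟨x, y, z⟩ ⟨-, rfl : y = 0⟩ ⟨x', y', z'⟩ ⟨-, rfl : y' = 0⟩ h
  obtain ⟨rfl : x = x', h2⟩ := Prod.ext_iff.mp h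
  have hz : (2 : ZMod (2 ^ (r + 1))) * ZMod.cast z = 2 * ZMod.cast z' := add_left_cancel h2
  rw [two_mul_cast_eq_two_mul_iff, castHom_cast] at hz
  rw [hz]

lemma changPhi_surjOn : Set.SurjOn (changPhi t r htr) (changH t r) {p | IsUnit p} := by
  rintro ⟨u, v⟩ huv
  obtain ⟨hu, hv⟩ := Prod.isUnit_iff.mp huv
  have hw : castHom (dvd_pow_self 2 r.succ_ne_zero) (ZMod 2)
      (v - castHom (pow_dvd_pow 2 (by omega : r + 1 ≤ t + 1)) (ZMod (2 ^ (r + 1))) u) = 0 := by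
    rw [map_sub, castHom_castHom, castHom_two_eq_one_of_isUnit _ hu,
      castHom_two_eq_one_of_isUnit _ hv, sub_self]
  obtain ⟨c, hc⟩ := exists_eq_natCast_mul_of_castHom_eq_zero _ hw
  refine ⟨(u, 0, castHom (pow_dvd_pow 2 r.le_succ) (ZMod (2 ^ r)) c), ⟨hu, rfl⟩, ?_⟩
  have hμ := (two_mul_cast_eq_two_mul_iff _ c).mpr rfl
  rw [Nat.cast_ofNat] at hc
  simp only [changPhi, hμ, ← hc, add_sub_cancel]

lemma eq_one_of_changPhi_eq_one {a} (ha : a ∈ changH t r) (h : changPhi t r htr a = 1) :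
    a = (1, 0, 0) :=
  changPhi_injOn htr ha one_mem_changH (h.trans (changPhi_one htr).symm)

lemma exists_inverse_mem_changH {a} (ha : a ∈ changH t r) :
    ∃ b ∈ changH t r, changOp t r htr a b = (1, 0, 0) ∧ changOp t r htr b a = (1, 0, 0) := by
  obtain ⟨p, hp⟩ := isUnit_changPhi htr ha
  obtain ⟨b, hb, hpb⟩ := changPhi_surjOn htr (show (↑p⁻¹ : _) ∈ {q | IsUnit q} from p⁻¹.isUnit)
  refine ⟨b, hb, eq_one_of_changPhi_eq_one htr (changOp_mem_changH htr ha hb) ?_,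
    eq_one_of_changPhi_eq_one htr (changOp_mem_changH htr hb ha) ?_⟩
  · rw [changPhi_changOp, ← hp, hpb, Units.mul_inv]
  · rw [changPhi_changOp, ← hp, hpb, Units.inv_mul]

end Chang

theorem stmt6_general (t r : ℕ) (htr : r ≤ t) :
    -- H is contained in E(t,r)
    changH t r ⊆ changE t r htr ∧
    -- H contains the identity and is closed under the operation and inverses
    (1, 0, 0) ∈ changH t r ∧
    (∀ a ∈ changH t r, ∀ b ∈ changH t r, changOp t r htr a b ∈ changH t r) ∧
    (∀ a ∈ changH t r, ∃ b ∈ changH t r,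
      changOp t r htr a b = (1, 0, 0) ∧ changOp t r htr b a = (1, 0, 0)) ∧
    -- φ restricted to H is injective
    (∀ a ∈ changH t r, ∀ b ∈ changH t r, changPhi t r htr a = changPhi t r htr b → a = b) ∧
    -- φ restricted to H is surjective onto the product of unit groups
    (∀ u : ZMod (2 ^ (t + 1)), ∀ v : ZMod (2 ^ (r + 1)), IsUnit u → IsUnit v →
      ∃ a ∈ changH t r, changPhi t r htr a = (u, v)) ∧
    -- hence φ admits a multiplicative section with values in H: the sequence splits
    (∃ s : ZMod (2 ^ (t + 1)) × ZMod (2 ^ (r + 1)) →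
        ZMod (2 ^ (t + 1)) × ZMod (2 ^ (r + 1)) × ZMod (2 ^ r),
      (∀ u : ZMod (2 ^ (t + 1)), ∀ v : ZMod (2 ^ (r + 1)), IsUnit u → IsUnit v →
        s (u, v) ∈ changH t r ∧ changPhi t r htr (s (u, v)) = (u, v)) ∧
      (∀ u u' : ZMod (2 ^ (t + 1)), ∀ v v' : ZMod (2 ^ (r + 1)),
        IsUnit u → IsUnit v → IsUnit u' → IsUnit v' →
        s (u * u', v * v') = changOp t r htr (s (u, v)) (s (u', v')))) := by
  have hsurj : ∀ u v, IsUnit u → IsUnit v → ∃ a ∈ changH t r, changPhi t r htr a = (u, v) :=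
    fun u v hu hv => changPhi_surjOn htr (Prod.isUnit_iff.mpr ⟨hu, hv⟩)
  set s := Function.invFunOn (changPhi t r htr) (changH t r)
  have hs : ∀ u v, IsUnit u → IsUnit v →
      s (u, v) ∈ changH t r ∧ changPhi t r htr (s (u, v)) = (u, v) := fun u v hu hv =>
    ⟨Function.invFunOn_mem (hsurj u v hu hv), Function.invFunOn_eq (hsurj u v hu hv)⟩
  refine ⟨fun a ha => ?_, one_mem_changH, fun a ha b hb => changOp_mem_changH htr ha hb,
    fun a ha => exists_inverse_mem_changH htr ha, changPhi_injOn htr, hsurj, s, hs, ?_⟩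
  · obtain ⟨b, -, hb⟩ := exists_inverse_mem_changH htr ha
    exact ⟨b, hb⟩
  · intro u u' v v' hu hv hu' hv'
    obtain ⟨hsuv, hφuv⟩ := hs u v hu hv
    obtain ⟨hsuv', hφuv'⟩ := hs u' v' hu' hv'
    obtain ⟨hsmul, hφmul⟩ := hs _ _ (hu.mul hu') (hv.mul hv')
    refine changPhi_injOn htr hsmul (changOp_mem_changH htr hsuv hsuv') ?_
    rw [hφmul, changPhi_changOp, hφuv, hφuv', Prod.mk_mul_mk]

/-- For `t ≥ r ≥ 1`, the subset `H = {(x,0,z) : x a unit}` is a subgroup of `E(t,r)`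
and `φ` restricts to a group isomorphism `H ≅ (ℤ/2^{t+1})ˣ × (ℤ/2^{r+1})ˣ`; in
particular the short exact sequence `ℤ/2^{r+1} ↪ E(t,r) ↠ (ℤ/2^{t+1})ˣ × (ℤ/2^{r+1})ˣ`
splits. -/
theorem stmt6 (t r : ℕ) (hr : 1 ≤ r) (htr : r ≤ t) :
    -- H is contained in E(t,r)
    changH t r ⊆ changE t r htr ∧
    -- H contains the identity and is closed under the operation and inverses
    (1, 0, 0) ∈ changH t r ∧
    (∀ a ∈ changH t r, ∀ b ∈ changH t r, changOp t r htr a b ∈ changH t r) ∧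
    (∀ a ∈ changH t r, ∃ b ∈ changH t r,
      changOp t r htr a b = (1, 0, 0) ∧ changOp t r htr b a = (1, 0, 0)) ∧
    -- φ restricted to H is injective
    (∀ a ∈ changH t r, ∀ b ∈ changH t r, changPhi t r htr a = changPhi t r htr b → a = b) ∧
    -- φ restricted to H is surjective onto the product of unit groups
    (∀ u : ZMod (2 ^ (t + 1)), ∀ v : ZMod (2 ^ (r + 1)), IsUnit u → IsUnit v →
      ∃ a ∈ changH t r, changPhi t r htr a = (u, v)) ∧
    -- hence φ admits a multiplicative section with values in H: the sequence splits
    (∃ s : ZMod (2 ^ (t + 1)) × ZMod (2 ^ (r + 1)) →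
        ZMod (2 ^ (t + 1)) × ZMod (2 ^ (r + 1)) × ZMod (2 ^ r),
      (∀ u : ZMod (2 ^ (t + 1)), ∀ v : ZMod (2 ^ (r + 1)), IsUnit u → IsUnit v →
        s (u, v) ∈ changH t r ∧ changPhi t r htr (s (u, v)) = (u, v)) ∧
      (∀ u u' : ZMod (2 ^ (t + 1)), ∀ v v' : ZMod (2 ^ (r + 1)),
        IsUnit u → IsUnit v → IsUnit u' → IsUnit v' →
        s (u * u', v * v') = changOp t r htr (s (u, v)) (s (u', v')))) :=
  stmt6_general t r htr
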